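/- Let U ⊆ ℝⁿ be open, let G : U → ℝ be smooth with G > 0, and let (ã^{ij}) be a smooth field of symmetric real n×n matrices on U. Define Δψ := G^{-1/2}·∑_{i,j} ∂_i( G^{1/2}·ã^{ij}·∂_j ψ ) and ∇_i ψ := ∂_i ψ + (1/4)(∂_i log G)·ψ on smooth ψ : U → ℂ. Then there exists a single smooth function V : U → ℝ, independent of ψ, such that for every smooth ψ : U → ℂ: Δψ − ∑_{i,j} ∇_i( ã^{ij}·∇_j ψ ) = V·ψ. In other words, Δ ≡ 𝔭_i ã^{ij} 𝔭_j modulo multiplication (zeroth-order) operators, where 𝔭_i := √(-1)∇_i. -/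

import Mathlib

open scoped BigOperators

/-- `pd i f x` is the `i`-th partial derivative `∂_i f (x)` on `ℝⁿ`. -/
noncomputable def pd {n : ℕ} (i : Fin n) (f : (Fin n → ℝ) → ℂ) (x : Fin n → ℝ) : ℂ :=
  fderiv ℝ f x (Pi.single i 1)

/-- The anti-self-adjoint connection `∇_i ψ = ∂_i ψ + (1/4)(∂_i log G)·ψ`. -/
noncomputable def nablaSA {n : ℕ} (G : (Fin n → ℝ) → ℝ) (i : Fin n)
    (ψ : (Fin n → ℝ) → ℂ) (x : Fin n → ℝ) : ℂ :=
  pd i ψ x + (1 / 4 : ℂ) * pd i (fun y => (Real.log (G y) : ℂ)) x * ψ x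

/-- The Beltrami–Laplace operator
`Δψ = G^{-1/2}·∑_{i,j} ∂_i(G^{1/2}·ã^{ij}·∂_j ψ)` in a local chart. -/
noncomputable def laplaceBeltrami {n : ℕ} (G : (Fin n → ℝ) → ℝ)
    (a : (Fin n → ℝ) → Fin n → Fin n → ℝ)
    (ψ : (Fin n → ℝ) → ℂ) (x : Fin n → ℝ) : ℂ :=
  ((G x ^ (-(1 / 2 : ℝ)) : ℝ) : ℂ) *
    ∑ i, ∑ j, pd i (fun y => ((G y ^ (1 / 2 : ℝ) * a y i j : ℝ) : ℂ) * pd j ψ y) x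

/- STATEMENT 8 (Corollary 3.20): Δ ≡ 𝔭_i ã^{ij} 𝔭_j modulo F₀(𝒟): there exists a
single smooth real potential V, independent of ψ, with
Δψ − ∑ ∇_i(ã^{ij} ∇_j ψ) = V·ψ for all smooth ψ. -/
noncomputable def pdR {n : ℕ} (i : Fin n) (f : (Fin n → ℝ) → ℝ) (x : Fin n → ℝ) : ℝ :=
  fderiv ℝ f x (Pi.single i 1)

variable {n : ℕ} {i j : Fin n} {f g : (Fin n → ℝ) → ℂ} {u v G : (Fin n → ℝ) → ℝ}
  {x : Fin n → ℝ} {U : Set (Fin n → ℝ)}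

lemma pd_congr (h : f =ᶠ[nhds x] g) : pd i f x = pd i g x := by
  unfold pd; rw [h.fderiv_eq]

lemma pdR_congr (h : u =ᶠ[nhds x] v) : pdR i u x = pdR i v x := by
  unfold pdR; rw [h.fderiv_eq]

lemma pd_add (hf : DifferentiableAt ℝ f x) (hg : DifferentiableAt ℝ g x) :
    pd i (fun y => f y + g y) x = pd i f x + pd i g x := by
  unfold pd; rw [fderiv_fun_add hf hg]; rfl

lemma pd_mul (hf : DifferentiableAt ℝ f x) (hg : DifferentiableAt ℝ g x) :
    pd i (fun y => f y * g y) x = pd i f x * g x + f x * pd i g x := by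
  unfold pd; rw [fderiv_fun_mul hf hg]
  simp only [ContinuousLinearMap.add_apply, ContinuousLinearMap.smul_apply, smul_eq_mul]
  ring

lemma pd_const_mul (c : ℂ) (hf : DifferentiableAt ℝ f x) :
    pd i (fun y => c * f y) x = c * pd i f x := by
  unfold pd; rw [fderiv_const_mul hf]; rfl

lemma pdR_mul (hu : DifferentiableAt ℝ u x) (hv : DifferentiableAt ℝ v x) :
    pdR i (fun y => u y * v y) x = pdR i u x * v x + u x * pdR i v x := by
  unfold pdR; rw [fderiv_fun_mul hu hv]
  simp only [ContinuousLinearMap.add_apply, ContinuousLinearMap.smul_apply, smul_eq_mul]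
  ring

lemma pd_ofReal (hu : DifferentiableAt ℝ u x) :
    pd i (fun y => ((u y : ℝ) : ℂ)) x = ((pdR i u x : ℝ) : ℂ) := by
  have h : HasFDerivAt (fun y => ((u y : ℝ) : ℂ))
      (Complex.ofRealCLM.comp (fderiv ℝ u x)) x :=
    Complex.ofRealCLM.hasFDerivAt.comp x hu.hasFDerivAt
  unfold pd pdR; rw [h.fderiv]; rfl

lemma pdR_log (hu : DifferentiableAt ℝ u x) (h0 : u x ≠ 0) :
    pdR i (fun y => Real.log (u y)) x = (u x)⁻¹ * pdR i u x := by
  have h : HasFDerivAt (fun y => Real.log (u y)) ((u x)⁻¹ • fderiv ℝ u x) x :=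
    (Real.hasDerivAt_log h0).comp_hasFDerivAt x hu.hasFDerivAt
  unfold pdR; rw [h.fderiv]; simp

lemma pdR_exp (hu : DifferentiableAt ℝ u x) :
    pdR i (fun y => Real.exp (u y)) x = Real.exp (u x) * pdR i u x := by
  have h : HasFDerivAt (fun y => Real.exp (u y)) (Real.exp (u x) • fderiv ℝ u x) x :=
    (Real.hasDerivAt_exp (u x)).comp_hasFDerivAt x hu.hasFDerivAt
  unfold pdR; rw [h.fderiv]; simp

lemma diffAt_of_contDiffOn (hU : IsOpen U) (hx : x ∈ U) {E : Type*}
    [NormedAddCommGroup E] [NormedSpace ℝ E] {f : (Fin n → ℝ) → E}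
    (hf : ContDiffOn ℝ (⊤ : ℕ∞) f U) : DifferentiableAt ℝ f x :=
  (hf.contDiffAt (hU.mem_nhds hx)).differentiableAt (by simp)

lemma contDiffOn_pd (hU : IsOpen U) (hf : ContDiffOn ℝ (⊤ : ℕ∞) f U) :
    ContDiffOn ℝ (⊤ : ℕ∞) (fun y => pd i f y) U := by
  have h : ContDiffOn ℝ (⊤ : ℕ∞) (fun y => fderiv ℝ f y) U :=
    hf.fderiv_of_isOpen hU (by simp)
  exact h.clm_apply contDiffOn_const

lemma contDiffOn_pdR (hU : IsOpen U) (hu : ContDiffOn ℝ (⊤ : ℕ∞) u U) :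
    ContDiffOn ℝ (⊤ : ℕ∞) (fun y => pdR i u y) U := by
  have h : ContDiffOn ℝ (⊤ : ℕ∞) (fun y => fderiv ℝ u y) U :=
    hu.fderiv_of_isOpen hU (by simp)
  exact h.clm_apply contDiffOn_const

lemma pdR_const_mul {n : ℕ} {i : Fin n} (c : ℝ) {u : (Fin n → ℝ) → ℝ} {x : Fin n → ℝ}
    (hu : DifferentiableAt ℝ u x) :
    pdR i (fun y => c * u y) x = c * pdR i u x := by
  unfold pdR; rw [fderiv_const_mul hu]; rfl

lemma diffAt_ofReal {n : ℕ} {u : (Fin n → ℝ) → ℝ} {x : Fin n → ℝ}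
    (hu : DifferentiableAt ℝ u x) :
    DifferentiableAt ℝ (fun y => ((u y : ℝ) : ℂ)) x :=
  (Complex.ofRealCLM.hasFDerivAt.comp x hu.hasFDerivAt).differentiableAt

theorem laplaceBeltrami_eq_momentum_bilinear_mod_F0 {n : ℕ} (U : Set (Fin n → ℝ))
    (hU : IsOpen U)
    (G : (Fin n → ℝ) → ℝ) (hG : ContDiffOn ℝ (⊤ : ℕ∞) G U) (hGpos : ∀ x ∈ U, 0 < G x)
    (a : (Fin n → ℝ) → Fin n → Fin n → ℝ)
    (ha : ∀ i j, ContDiffOn ℝ (⊤ : ℕ∞) (fun x => a x i j) U)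
    (hasymm : ∀ x ∈ U, ∀ i j, a x i j = a x j i) :
    ∃ V : (Fin n → ℝ) → ℝ, ContDiffOn ℝ (⊤ : ℕ∞) V U ∧
      ∀ ψ : (Fin n → ℝ) → ℂ, ContDiffOn ℝ (⊤ : ℕ∞) ψ U → ∀ x ∈ U,
        laplaceBeltrami G a ψ x
            - (∑ i, ∑ j, nablaSA G i (fun y => ((a y i j : ℝ) : ℂ) * nablaSA G j ψ y) x)
          = ((V x : ℝ) : ℂ) * ψ x := by
  have hLf : ContDiffOn ℝ (⊤ : ℕ∞) (fun z => Real.log (G z)) U := hG.log fun y hy => (hGpos y hy).ne'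
  refine ⟨fun x => -∑ i, ∑ j, (1 / 4 * pdR i (fun y => a y i j) x * pdR j (fun z => Real.log (G z)) x + 1 / 4 * a x i j * pdR i (fun y => pdR j (fun z => Real.log (G z)) y) x + 1 / 16 * (a x i j * (pdR i (fun z => Real.log (G z)) x * pdR j (fun z => Real.log (G z)) x))), ?_, ?_⟩
  · refine ContDiffOn.neg ?_
    refine ContDiffOn.sum fun i _ => ContDiffOn.sum fun j _ => ?_
    refine ContDiffOn.add (ContDiffOn.add ?_ ?_) ?_
    · exact (contDiffOn_const.mul (contDiffOn_pdR hU (ha i j))).mul (contDiffOn_pdR hU hLf)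
    · exact (contDiffOn_const.mul (ha i j)).mul (contDiffOn_pdR hU (contDiffOn_pdR hU hLf))
    · exact contDiffOn_const.mul ((ha i j).mul ((contDiffOn_pdR hU hLf).mul (contDiffOn_pdR hU hLf)))
  intro ψ hψ x hx
  have hUx : U ∈ nhds x := hU.mem_nhds hx
  have hLfd : ∀ y ∈ U, DifferentiableAt ℝ (fun z => Real.log (G z)) y :=
    fun y hy => diffAt_of_contDiffOn hU hy hLf
  have had : ∀ i j : Fin n, DifferentiableAt ℝ (fun y => a y i j) x :=
    fun i j => diffAt_of_contDiffOn hU hx (ha i j)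
  have hψd : DifferentiableAt ℝ ψ x := diffAt_of_contDiffOn hU hx hψ
  have hpdψd : ∀ j : Fin n, DifferentiableAt ℝ (fun y => pd j ψ y) x :=
    fun j => diffAt_of_contDiffOn hU hx (contDiffOn_pd hU hψ)
  have hpdLfd : ∀ j : Fin n, DifferentiableAt ℝ (fun y => pdR j (fun z => Real.log (G z)) y) x :=
    fun j => diffAt_of_contDiffOn hU hx (contDiffOn_pdR hU hLf)
  have hSc : ContDiffOn ℝ (⊤ : ℕ∞) (fun y => Real.exp (1 / 2 * Real.log (G y))) U :=
    Real.contDiff_exp.comp_contDiffOn (contDiffOn_const.mul hLf)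
  have hSd : DifferentiableAt ℝ (fun y => Real.exp (1 / 2 * Real.log (G y))) x :=
    diffAt_of_contDiffOn hU hx hSc
  have hSne : ((Real.exp (1 / 2 * Real.log (G x)) : ℝ) : ℂ) ≠ 0 := by
    exact_mod_cast (Real.exp_pos _).ne'
  have hhalf : DifferentiableAt ℝ (fun y => 1 / 2 * Real.log (G y)) x :=
    (differentiableAt_const _).mul (hLfd x hx)
  have hpdS : ∀ i : Fin n, pdR i (fun y => Real.exp (1 / 2 * Real.log (G y))) x
      = Real.exp (1 / 2 * Real.log (G x)) * (1 / 2 * pdR i (fun z => Real.log (G z)) x) := by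
    intro i
    rw [pdR_exp hhalf, pdR_const_mul _ (hLfd x hx)]
  have hDelta : ∀ i j : Fin n,
      pd i (fun y => ((G y ^ (1 / 2 : ℝ) * a y i j : ℝ) : ℂ) * pd j ψ y) x
        = ((Real.exp (1 / 2 * Real.log (G x)) : ℝ) : ℂ) * ((((1 / 2 * pdR i (fun z => Real.log (G z)) x * a x i j + pdR i (fun y => a y i j) x : ℝ)) : ℂ) * pd j ψ x + ((a x i j : ℝ) : ℂ) * pd i (fun y => pd j ψ y) x) := by
    intro i j
    have hev : (fun y => ((G y ^ (1 / 2 : ℝ) * a y i j : ℝ) : ℂ) * pd j ψ y)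
        =ᶠ[nhds x] fun y => ((Real.exp (1 / 2 * Real.log (G y)) * a y i j : ℝ) : ℂ) * pd j ψ y := by
      filter_upwards [hUx] with y hy
      rw [Real.rpow_def_of_pos (hGpos y hy), mul_comm (Real.log (G y))]
    rw [pd_congr hev, pd_mul (diffAt_ofReal (hSd.fun_mul (had i j))) (hpdψd j),
      pd_ofReal (hSd.fun_mul (had i j)), pdR_mul hSd (had i j), hpdS i]
    push_cast
    ring
  have hLB : laplaceBeltrami G a ψ x = ∑ i, ∑ j, ((((1 / 2 * pdR i (fun z => Real.log (G z)) x * a x i j + pdR i (fun y => a y i j) x : ℝ)) : ℂ) * pd j ψ x + ((a x i j : ℝ) : ℂ) * pd i (fun y => pd j ψ y) x) := by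
    unfold laplaceBeltrami
    have h1 : ∑ i, ∑ j, pd i (fun y => ((G y ^ (1 / 2 : ℝ) * a y i j : ℝ) : ℂ) * pd j ψ y) x
        = ((Real.exp (1 / 2 * Real.log (G x)) : ℝ) : ℂ) * ∑ i, ∑ j, ((((1 / 2 * pdR i (fun z => Real.log (G z)) x * a x i j + pdR i (fun y => a y i j) x : ℝ)) : ℂ) * pd j ψ x + ((a x i j : ℝ) : ℂ) * pd i (fun y => pd j ψ y) x) := by
      rw [Finset.mul_sum]
      refine Finset.sum_congr rfl fun i _ => ?_
      rw [Finset.mul_sum]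
      exact Finset.sum_congr rfl fun j _ => hDelta i j
    rw [h1, show (G x ^ (-(1 / 2) : ℝ)) = (Real.exp (1 / 2 * Real.log (G x)))⁻¹ from by
      rw [Real.rpow_neg (hGpos x hx).le, Real.rpow_def_of_pos (hGpos x hx),
        mul_comm (Real.log (G x))]]
    rw [Complex.ofReal_inv, inv_mul_cancel_left₀ hSne]
  have hN : ∀ i j : Fin n,
      nablaSA G i (fun y => ((a y i j : ℝ) : ℂ) * nablaSA G j ψ y) x = (((pdR i (fun y => a y i j) x : ℝ) : ℂ) * (pd j ψ x + (1 / 4 : ℂ) * ((pdR j (fun z => Real.log (G z)) x : ℝ) : ℂ) * ψ x) + ((a x i j : ℝ) : ℂ) * (pd i (fun y => pd j ψ y) x + (1 / 4 : ℂ) * ((pdR i (fun y => pdR j (fun z => Real.log (G z)) y) x : ℝ) : ℂ) * ψ x + (1 / 4 : ℂ) * ((pdR j (fun z => Real.log (G z)) x : ℝ) : ℂ) * pd i ψ x) + (1 / 4 : ℂ) * ((pdR i (fun z => Real.log (G z)) x : ℝ) : ℂ) * (((a x i j : ℝ) : ℂ) * (pd j ψ x + (1 / 4 : ℂ) * ((pdR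 j (fun z => Real.log (G z)) x : ℝ) : ℂ) * ψ x))) := by
    intro i j
    unfold nablaSA
    have hev2 : (fun y => ((a y i j : ℝ) : ℂ)
          * (pd j ψ y + (1 / 4 : ℂ) * pd j (fun z => ((Real.log (G z) : ℝ) : ℂ)) y * ψ y))
        =ᶠ[nhds x] fun y => ((a y i j : ℝ) : ℂ)
          * (pd j ψ y + (1 / 4 : ℂ) * ((pdR j (fun z => Real.log (G z)) y : ℝ) : ℂ) * ψ y) := by
      filter_upwards [hUx] with y hy
      rw [pd_ofReal (i := j) (hLfd y hy)]
    rw [pd_congr hev2]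
    rw [pd_mul (diffAt_ofReal (had i j))
      ((hpdψd j).fun_add (((differentiableAt_const _).fun_mul (diffAt_ofReal (hpdLfd j))).fun_mul hψd))]
    rw [pd_add (hpdψd j) (((differentiableAt_const _).fun_mul (diffAt_ofReal (hpdLfd j))).fun_mul hψd)]
    rw [pd_mul ((differentiableAt_const _).fun_mul (diffAt_ofReal (hpdLfd j))) hψd]
    rw [pd_const_mul _ (diffAt_ofReal (hpdLfd j))]
    beta_reduce
    rw [pd_ofReal (i := i) (hpdLfd j), pd_ofReal (i := i) (had i j),
      pd_ofReal (i := i) (hLfd x hx), pd_ofReal (i := j) (hLfd x hx)]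
    ring
  have hNs : (∑ i, ∑ j, nablaSA G i (fun y => ((a y i j : ℝ) : ℂ) * nablaSA G j ψ y) x)
      = ∑ i, ∑ j, (((pdR i (fun y => a y i j) x : ℝ) : ℂ) * (pd j ψ x + (1 / 4 : ℂ) * ((pdR j (fun z => Real.log (G z)) x : ℝ) : ℂ) * ψ x) + ((a x i j : ℝ) : ℂ) * (pd i (fun y => pd j ψ y) x + (1 / 4 : ℂ) * ((pdR i (fun y => pdR j (fun z => Real.log (G z)) y) x : ℝ) : ℂ) * ψ x + (1 / 4 : ℂ) * ((pdR j (fun z => Real.log (G z)) x : ℝ) : ℂ) * pd i ψ x) + (1 / 4 : ℂ) * ((pdR i (fun z => Real.log (G z)) x : ℝ) : ℂ) * (((a x i j : ℝ) : ℂ) * (pd j ψ x + (1 / 4 : ℂ) * ((pdR j (fun z => Real.log (G z)) x : ℝ) : ℂ) * ψ x))) :=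
    Finset.sum_congr rfl fun i _ => Finset.sum_congr rfl fun j _ => hN i j
  have hfzero : (∑ i, ∑ j, ((1 / 4 : ℂ) * ((pdR i (fun z => Real.log (G z)) x : ℝ) : ℂ) * ((a x i j : ℝ) : ℂ) * pd j ψ x - (1 / 4 : ℂ) * ((a x i j : ℝ) : ℂ) * ((pdR j (fun z => Real.log (G z)) x : ℝ) : ℂ) * pd i ψ x)) = (0 : ℂ) := by
    have h1 : ∑ i : Fin n, ∑ j : Fin n,
          (1 / 4 : ℂ) * ((pdR i (fun z => Real.log (G z)) x : ℝ) : ℂ) * ((a x i j : ℝ) : ℂ) * pd j ψ x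
        = ∑ i : Fin n, ∑ j : Fin n,
          (1 / 4 : ℂ) * ((a x i j : ℝ) : ℂ) * ((pdR j (fun z => Real.log (G z)) x : ℝ) : ℂ) * pd i ψ x := by
      rw [Finset.sum_comm]
      refine Finset.sum_congr rfl fun i _ => Finset.sum_congr rfl fun j _ => ?_
      rw [hasymm x hx j i]
      ring
    simp only [Finset.sum_sub_distrib]
    rw [h1, sub_self]
  have hgsum : (∑ i, ∑ j, (-(((1 / 4 * pdR i (fun y => a y i j) x * pdR j (fun z => Real.log (G z)) x + 1 / 4 * a x i j * pdR i (fun y => pdR j (fun z => Real.log (G z)) y) x + 1 / 16 * (a x i j * (pdR i (fun z => Real.log (G z)) x * pdR j (fun z => Real.log (G z)) x))) : ℝ) : ℂ) * ψ x))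
      = (((-∑ i, ∑ j, (1 / 4 * pdR i (fun y => a y i j) x * pdR j (fun z => Real.log (G z)) x + 1 / 4 * a x i j * pdR i (fun y => pdR j (fun z => Real.log (G z)) y) x + 1 / 16 * (a x i j * (pdR i (fun z => Real.log (G z)) x * pdR j (fun z => Real.log (G z)) x))) : ℝ)) : ℂ) * ψ x := by
    push_cast
    simp only [neg_mul, Finset.sum_mul, Finset.sum_neg_distrib]
  rw [hLB, hNs]
  calc (∑ i, ∑ j, ((((1 / 2 * pdR i (fun z => Real.log (G z)) x * a x i j + pdR i (fun y => a y i j) x : ℝ)) : ℂ) * pd j ψ x + ((a x i j : ℝ) : ℂ) * pd i (fun y => pd j ψ y) x)) - ∑ i, ∑ j, (((pdR i (fun y => a y i j) x : ℝ) : ℂ) * (pd j ψ x + (1 / 4 : ℂ) * ((pdR j (fun z => Real.log (G z)) x : ℝ) : ℂ) * ψ x) + ((a x i j : ℝ) : ℂ) * (pd i (fun y => pd j ψ y) x + (1 / 4 : ℂ) * ((pdR i (fun y => pdR j (fun z => Real.log (G z)) y) x : ℝ) : ℂ) * ψ x + (1 / 4 : ℂ) * ((pdR j (fun z => Real.log (G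 z)) x : ℝ) : ℂ) * pd i ψ x) + (1 / 4 : ℂ) * ((pdR i (fun z => Real.log (G z)) x : ℝ) : ℂ) * (((a x i j : ℝ) : ℂ) * (pd j ψ x + (1 / 4 : ℂ) * ((pdR j (fun z => Real.log (G z)) x : ℝ) : ℂ) * ψ x)))
      = ∑ i, ((∑ j, ((((1 / 2 * pdR i (fun z => Real.log (G z)) x * a x i j + pdR i (fun y => a y i j) x : ℝ)) : ℂ) * pd j ψ x + ((a x i j : ℝ) : ℂ) * pd i (fun y => pd j ψ y) x)) - ∑ j, (((pdR i (fun y => a y i j) x : ℝ) : ℂ) * (pd j ψ x + (1 / 4 : ℂ) * ((pdR j (fun z => Real.log (G z)) x : ℝ) : ℂ) * ψ x) + ((a x i j : ℝ) : ℂ) * (pd i (fun y => pd j ψ y) x + (1 / 4 : ℂ) * ((pdR i (fun y => pdR j (fun z => Real.log (G z)) y) x : ℝ) : ℂ) * ψ x + (1 / 4 : ℂ) * ((pdR j (fun z => Real.log (G z)) x : ℝ) : ℂ) * pd i ψ x) + (1 / 4 : ℂ) * ((pdR i (fun z => Real.log (G z)) x : ℝ) : ℂ) * (((a x i j : ℝ)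 : ℂ) * (pd j ψ x + (1 / 4 : ℂ) * ((pdR j (fun z => Real.log (G z)) x : ℝ) : ℂ) * ψ x)))) := (Finset.sum_sub_distrib _ _).symm
    _ = ∑ i, ∑ j, (((((1 / 2 * pdR i (fun z => Real.log (G z)) x * a x i j + pdR i (fun y => a y i j) x : ℝ)) : ℂ) * pd j ψ x + ((a x i j : ℝ) : ℂ) * pd i (fun y => pd j ψ y) x) - (((pdR i (fun y => a y i j) x : ℝ) : ℂ) * (pd j ψ x + (1 / 4 : ℂ) * ((pdR j (fun z => Real.log (G z)) x : ℝ) : ℂ) * ψ x) + ((a x i j : ℝ) : ℂ) * (pd i (fun y => pd j ψ y) x + (1 / 4 : ℂ) * ((pdR i (fun y => pdR j (fun z => Real.log (G z)) y) x : ℝ) : ℂ) * ψ x + (1 / 4 : ℂ) * ((pdR j (fun z => Real.log (G z)) x : ℝ) : ℂ) * pd i ψ x) + (1 / 4 : ℂ) * ((pdR i (fun z => Real.log (G z)) x : ℝ) : ℂ) * (((a x i j : ℝ) : ℂ) * (pd j ψ x + (1 / 4 : ℂ) * ((pdR j (fun z => Real.log (G z)) x : ℝ) : ℂ) * ψ x))))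 :=
        Finset.sum_congr rfl fun i _ => (Finset.sum_sub_distrib _ _).symm
    _ = ∑ i, ∑ j, (((1 / 4 : ℂ) * ((pdR i (fun z => Real.log (G z)) x : ℝ) : ℂ) * ((a x i j : ℝ) : ℂ) * pd j ψ x - (1 / 4 : ℂ) * ((a x i j : ℝ) : ℂ) * ((pdR j (fun z => Real.log (G z)) x : ℝ) : ℂ) * pd i ψ x) + (-(((1 / 4 * pdR i (fun y => a y i j) x * pdR j (fun z => Real.log (G z)) x + 1 / 4 * a x i j * pdR i (fun y => pdR j (fun z => Real.log (G z)) y) x + 1 / 16 * (a x i j * (pdR i (fun z => Real.log (G z)) x * pdR j (fun z => Real.log (G z)) x))) : ℝ) : ℂ) * ψ x)) :=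
        Finset.sum_congr rfl fun i _ => Finset.sum_congr rfl fun j _ => by push_cast; ring
    _ = (∑ i, ∑ j, ((1 / 4 : ℂ) * ((pdR i (fun z => Real.log (G z)) x : ℝ) : ℂ) * ((a x i j : ℝ) : ℂ) * pd j ψ x - (1 / 4 : ℂ) * ((a x i j : ℝ) : ℂ) * ((pdR j (fun z => Real.log (G z)) x : ℝ) : ℂ) * pd i ψ x)) + ∑ i, ∑ j, (-(((1 / 4 * pdR i (fun y => a y i j) x * pdR j (fun z => Real.log (G z)) x + 1 / 4 * a x i j * pdR i (fun y => pdR j (fun z => Real.log (G z)) y) x + 1 / 16 * (a x i j * (pdR i (fun z => Real.log (G z)) x * pdR j (fun z => Real.log (G z)) x))) : ℝ) : ℂ) * ψ x) := by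
        simp only [Finset.sum_add_distrib]
    _ = ∑ i, ∑ j, (-(((1 / 4 * pdR i (fun y => a y i j) x * pdR j (fun z => Real.log (G z)) x + 1 / 4 * a x i j * pdR i (fun y => pdR j (fun z => Real.log (G z)) y) x + 1 / 16 * (a x i j * (pdR i (fun z => Real.log (G z)) x * pdR j (fun z => Real.log (G z)) x))) : ℝ) : ℂ) * ψ x) := by rw [hfzero, zero_add]
    _ = (((-∑ i, ∑ j, (1 / 4 * pdR i (fun y => a y i j) x * pdR j (fun z => Real.log (G z)) x + 1 / 4 * a x i j * pdR i (fun y => pdR j (fun z => Real.log (G z)) y) x + 1 / 16 * (a x i j * (pdR i (fun z => Real.log (G z)) x * pdR j (fun z => Real.log (G z)) x))) : ℝ)) : ℂ) * ψ x := hgsum
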